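/- Let 0 < h < 1 and let δ > 0 satisfy 1/4 + δ·tan(arctan(1/(2δ)) + δ·log h) − δ² = 0 with arctan(1/(2δ)) + δ·log h ∈ (−π/2, π/2). Then every u ∈ U_h satisfies ∫₀¹ u'(x)² dx ≥ (1/4 + δ²)·∫₀¹ x⁻² u(x)² dx. -/

import Mathlib

open MeasureTheory Real Set Filter

noncomputable section

/-- `u ∈ H¹(0,1)` with weak derivative `u'`: `u` is continuous on `[0,1]`,
`u'` is (square-)integrable on `(0,1)`, and `u(x) = u(0) + ∫₀ˣ u'`. -/
def IsH1 (u u' : ℝ → ℝ) : Prop :=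
  ContinuousOn u (Set.Icc 0 1) ∧
  IntervalIntegrable u' volume 0 1 ∧
  IntegrableOn (fun t => u' t ^ 2) (Set.Ioo 0 1) ∧
  ∀ x ∈ Set.Icc (0:ℝ) 1, u x = u 0 + ∫ t in (0:ℝ)..x, u' t

/-- `u ∈ U_h` (with weak derivative `u'`): `u ∈ H¹(0,1)`, `u(0) = 0`, and `u` is
affine on `[0,h]`, i.e. `u(x) = (x/h)·u(h)` there. -/
def MemUh (h : ℝ) (u u' : ℝ → ℝ) : Prop :=
  IsH1 u u' ∧ u 0 = 0 ∧ ∀ x ∈ Set.Icc (0:ℝ) h, u x = (x / h) * u h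

/-! On `[0, h]` the function `u` is linear, so by Cauchy–Schwarz `∫₀ʰ u'² ≥ u(h)²/h = ∫₀ʰ u²/x²`.
On `[h, 1]` we use the ground state substitution `0 ≤ ∫ (u' - f u)²` with
`f(x) = (1/2 - δ tan(arctan(1/(2δ)) + δ log x))/x`, a solution of the Riccati equation
`f' + f² + (1/4 + δ²)/x² = 0`. It vanishes at `1`, and the condition on `δ` says exactly that
`f(h) = (1 - (1/4 + δ²))/h`, so that the boundary term at `h` is absorbed by the gain on
`[0, h]`. -/

theorem IntervalIntegrable.mono_Icc {E : Type*} [NormedAddCommGroup E] {f : ℝ → E}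
    {μ : Measure ℝ} {a b c d : ℝ} (hf : IntervalIntegrable f μ a b) (hac : a ≤ c) (hcd : c ≤ d)
    (hdb : d ≤ b) :
    IntervalIntegrable f μ c d :=
  hf.mono_set (uIcc_subset_uIcc (mem_uIcc_of_le hac (hcd.trans hdb))
    (mem_uIcc_of_le (hac.trans hcd) hdb))

theorem eq_add_integral_of_mem_Icc {u u' : ℝ → ℝ} {a b c : ℝ}
    (hu : ∀ x ∈ Icc a b, u x = u a + ∫ t in a..x, u' t)
    (hu' : IntervalIntegrable u' volume a b) (hc : c ∈ Icc a b) :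
    ∀ x ∈ Icc c b, u x = u c + ∫ t in c..x, u' t := by
  intro x hx
  rw [hu x ⟨hc.1.trans hx.1, hx.2⟩, hu c hc, add_assoc,
    intervalIntegral.integral_add_adjacent_intervals (hu'.mono_Icc le_rfl hc.1 hc.2)
      (hu'.mono_Icc hc.1 hx.1 hx.2)]

theorem continuousOn_of_eq_add_integral {u u' : ℝ → ℝ} {a b : ℝ} (hab : a ≤ b)
    (hu : ∀ x ∈ Icc a b, u x = u a + ∫ t in a..x, u' t)
    (hu' : IntervalIntegrable u' volume a b) : ContinuousOn u (Icc a b) := by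
  have hprim := intervalIntegral.continuousOn_primitive_interval' hu' left_mem_uIcc
  rw [uIcc_of_le hab] at hprim
  exact (continuousOn_const.add hprim).congr hu

theorem intervalIntegral.integral_mul_add_mul_eq_of_eq_add_integral {a b : ℝ}
    {F G p q : ℝ → ℝ}
    (hab : a ≤ b) (hp : IntervalIntegrable p volume a b) (hq : IntervalIntegrable q volume a b)
    (hF : ∀ x ∈ Icc a b, F x = F a + ∫ t in a..x, p t)
    (hG : ∀ x ∈ Icc a b, G x = G a + ∫ t in a..x, q t) :
    ∫ x in a..b, (F x * q x + p x * G x) = F b * G b - F a * G a := by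
  set P : ℝ → ℝ := fun x => ∫ t in a..x, p t
  set Q : ℝ → ℝ := fun x => ∫ t in a..x, q t
  have hP := hp.absolutelyContinuousOnInterval_intervalIntegral left_mem_uIcc
  have hQ := hq.absolutelyContinuousOnInterval_intervalIntegral left_mem_uIcc
  have hPQ : ∫ x in a..b, (p x * Q x + P x * q x) = P b * Q b := by
    have hIBP := hP.integral_deriv_mul_eq_sub hQ
    rw [intervalIntegral.integral_same, zero_mul, sub_zero] at hIBP
    rw [← hIBP]
    refine intervalIntegral.integral_congr_ae ?_
    filter_upwards [hp.ae_hasDerivAt_integral, hq.ae_hasDerivAt_integral] with x hpx hqx hx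
    have hx' := uIoc_subset_uIcc hx
    rw [(hpx hx' a left_mem_uIcc).deriv, (hqx hx' a left_mem_uIcc).deriv]
  calc ∫ x in a..b, (F x * q x + p x * G x)
      = ∫ x in a..b, (F a * q x + p x * G a + (p x * Q x + P x * q x)) := by
        refine intervalIntegral.integral_congr fun x hx => ?_
        rw [uIcc_of_le hab] at hx
        rw [hF x hx, hG x hx]; ring
    _ = F a * Q b + P b * G a + P b * Q b := by
        rw [intervalIntegral.integral_add ((hq.const_mul _).add (hp.mul_const _))
            ((hp.mul_continuousOn hQ.continuousOn).add (hq.continuousOn_mul hP.continuousOn)),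
          intervalIntegral.integral_add (hq.const_mul _) (hp.mul_const _), hPQ,
          intervalIntegral.integral_const_mul, intervalIntegral.integral_mul_const]
    _ = F b * G b - F a * G a := by
        rw [hF b (right_mem_Icc.2 hab), hG b (right_mem_Icc.2 hab)]; ring

/-- Ground state substitution: for a solution of the Riccati equation `f' = -f² - W`,
`0 ≤ ∫ (u' - f u)² = ∫ u'² + f(a) u(a)² - f(b) u(b)² - ∫ W u²`. -/
theorem integral_mul_sq_le_of_riccati {a b : ℝ} {u u' f W : ℝ → ℝ} (hab : a ≤ b)
    (hu : ∀ x ∈ Icc a b, u x = u a + ∫ t in a..x, u' t)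
    (hu' : IntervalIntegrable u' volume a b)
    (hu'2 : IntervalIntegrable (fun x => u' x ^ 2) volume a b)
    (hf : ∀ x ∈ Icc a b, HasDerivAt f (-f x ^ 2 - W x) x)
    (hW : ContinuousOn W (Icc a b)) :
    ∫ x in a..b, W x * u x ^ 2 ≤ (∫ x in a..b, u' x ^ 2) + f a * u a ^ 2 - f b * u b ^ 2 := by
  have huc := continuousOn_of_eq_add_integral hab hu hu'
  have hfc : ContinuousOn f (Icc a b) := fun x hx => (hf x hx).continuousAt.continuousWithinAt
  have hf'c : ContinuousOn (fun x => -f x ^ 2 - W x) (Icc a b) := (hfc.pow 2).neg.sub hW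
  rw [← uIcc_of_le hab] at huc hfc hf'c hW
  set q : ℝ → ℝ := fun x => u x * u' x + u' x * u x
  have hq : IntervalIntegrable q volume a b :=
    (hu'.continuousOn_mul huc).add (hu'.mul_continuousOn huc)
  have hu_sq : ∀ x ∈ Icc a b, u x ^ 2 = u a ^ 2 + ∫ t in a..x, q t := by
    intro x hx
    have hux := intervalIntegral.integral_mul_add_mul_eq_of_eq_add_integral hx.1
      (hu'.mono_Icc le_rfl hx.1 hx.2) (hu'.mono_Icc le_rfl hx.1 hx.2)
      (fun y hy => hu y ⟨hy.1, hy.2.trans hx.2⟩) (fun y hy => hu y ⟨hy.1, hy.2.trans hx.2⟩)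
    rw [hux]; ring
  have hf_eq : ∀ x ∈ Icc a b, f x = f a + ∫ t in a..x, (-f t ^ 2 - W t) := by
    intro x hx
    rw [intervalIntegral.integral_eq_sub_of_hasDerivAt
      (fun t ht => hf t (by rw [uIcc_of_le hx.1] at ht; exact ⟨ht.1, ht.2.trans hx.2⟩))
      ((hf'c.intervalIntegrable).mono_Icc le_rfl hx.1 hx.2)]
    ring
  have hIBP := intervalIntegral.integral_mul_add_mul_eq_of_eq_add_integral hab
    hf'c.intervalIntegrable hq hf_eq hu_sq
  have hsq_nonneg : 0 ≤ ∫ x in a..b, (u' x - f x * u x) ^ 2 :=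
    intervalIntegral.integral_nonneg hab fun x _ => sq_nonneg _
  have hexpand : ∫ x in a..b, (u' x - f x * u x) ^ 2 = (∫ x in a..b, u' x ^ 2)
      - (∫ x in a..b, (f x * q x + (-f x ^ 2 - W x) * u x ^ 2)) - ∫ x in a..b, W x * u x ^ 2 := by
    have hI1 : IntervalIntegrable (fun x => f x * q x + (-f x ^ 2 - W x) * u x ^ 2) volume a b :=
      (hq.continuousOn_mul hfc).add (hf'c.mul (huc.pow 2)).intervalIntegrable
    have hI2 : IntervalIntegrable (fun x => W x * u x ^ 2) volume a b :=
      (hW.mul (huc.pow 2)).intervalIntegrable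
    rw [← intervalIntegral.integral_sub hu'2 hI1,
      ← intervalIntegral.integral_sub (hu'2.sub hI1) hI2]
    exact intervalIntegral.integral_congr fun x _ => by ring
  linarith

theorem sq_integral_div_le_integral_sq {a b : ℝ} {g : ℝ → ℝ} (hab : a < b)
    (hg : IntervalIntegrable g volume a b)
    (hg2 : IntervalIntegrable (fun x => g x ^ 2) volume a b) :
    (∫ x in a..b, g x) ^ 2 / (b - a) ≤ ∫ x in a..b, g x ^ 2 := by
  set c := (∫ x in a..b, g x) / (b - a)
  have hnonneg : 0 ≤ ∫ x in a..b, (g x - c) ^ 2 :=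
    intervalIntegral.integral_nonneg hab.le fun x _ => sq_nonneg _
  have hexpand : ∫ x in a..b, (g x - c) ^ 2
      = (∫ x in a..b, g x ^ 2) - 2 * c * (∫ x in a..b, g x) + c ^ 2 * (b - a) := by
    calc ∫ x in a..b, (g x - c) ^ 2 = ∫ x in a..b, (g x ^ 2 - 2 * c * g x + c ^ 2) :=
          intervalIntegral.integral_congr fun x _ => by ring
      _ = _ := by
          rw [intervalIntegral.integral_add (hg2.sub (hg.const_mul _)) intervalIntegrable_const,
            intervalIntegral.integral_sub hg2 (hg.const_mul _), intervalIntegral.integral_const_mul,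
            intervalIntegral.integral_const, smul_eq_mul]
          ring
  have hc : 2 * c * (∫ x in a..b, g x) - c ^ 2 * (b - a)
      = (∫ x in a..b, g x) ^ 2 / (b - a) := by
    simp only [c]
    field_simp [(sub_pos.2 hab).ne']
    ring
  linarith

theorem integral_sq_div_sq_of_linear {u : ℝ → ℝ} {h : ℝ} (hh : 0 < h)
    (hu : ∀ x ∈ Icc 0 h, u x = x / h * u h) :
    IntervalIntegrable (fun x => u x ^ 2 / x ^ 2) volume 0 h ∧
      ∫ x in (0:ℝ)..h, u x ^ 2 / x ^ 2 = u h ^ 2 / h := by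
  have hconst : EqOn (fun x => u x ^ 2 / x ^ 2) (fun _ => (u h / h) ^ 2) (Ioc 0 h) := by
    intro x hx
    simp only
    rw [hu x (Ioc_subset_Icc_self hx)]
    field_simp [hx.1.ne']
  constructor
  · rw [intervalIntegrable_iff_integrableOn_Ioc_of_le hh.le]
    exact (integrableOn_const measure_Ioc_lt_top.ne).congr_fun hconst.symm measurableSet_Ioc
  · rw [intervalIntegral.integral_of_le hh.le, setIntegral_congr_fun measurableSet_Ioc hconst]
    simp [hh.le]
    field_simp

def riccatiSolution (δ A x : ℝ) : ℝ := (1 / 2 - δ * tan (A + δ * log x)) / x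

theorem hasDerivAt_riccatiSolution {δ A x : ℝ} (hx : 0 < x) (hcos : cos (A + δ * log x) ≠ 0) :
    HasDerivAt (riccatiSolution δ A) (-riccatiSolution δ A x ^ 2 - (1 / 4 + δ ^ 2) / x ^ 2) x := by
  have hθ : HasDerivAt (fun y => A + δ * log y) (δ * x⁻¹) x :=
    ((hasDerivAt_log hx.ne').const_mul δ).const_add A
  have htan := ((hasDerivAt_tan hcos).comp x hθ).const_mul δ |>.const_sub (1 / 2)
  refine HasDerivAt.congr_deriv (f := riccatiSolution δ A) (htan.div (hasDerivAt_id x) hx.ne') ?_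
  have hsec : 1 / cos (A + δ * log x) ^ 2 = 1 + tan (A + δ * log x) ^ 2 := by
    rw [← inv_one_add_tan_sq hcos, one_div, inv_inv]
  simp only [riccatiSolution, Function.comp_def, hsec]
  field_simp
  ring

theorem riccatiSolution_one {δ : ℝ} (hδ : δ ≠ 0) :
    riccatiSolution δ (arctan (1 / (2 * δ))) 1 = 0 := by
  simp only [riccatiSolution, log_one, mul_zero, add_zero, tan_arctan]
  field_simp
  norm_num

theorem cos_add_mul_log_pos {δ A h x : ℝ} (hh : 0 < h) (hδ : 0 ≤ δ) (hA : A < π / 2)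
    (hAh : -(π / 2) < A + δ * log h) (hx : x ∈ Icc h 1) : 0 < cos (A + δ * log x) := by
  have hx0 : 0 < x := hh.trans_le hx.1
  refine cos_pos_of_mem_Ioo ⟨hAh.trans_le ?_, lt_of_le_of_lt ?_ hA⟩
  · gcongr
    exact hx.1
  · nlinarith [log_nonpos hx0.le hx.2]

theorem mul_integral_sq_div_sq_le {h δ : ℝ} {u u' : ℝ → ℝ} (hh0 : 0 < h) (hh1 : h ≤ 1)
    (hδ : 0 < δ) (hang : -(π / 2) < arctan (1 / (2 * δ)) + δ * log h)
    (heq : 1 / 4 + δ * tan (arctan (1 / (2 * δ)) + δ * log h) - δ ^ 2 = 0)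
    (hu : ∀ x ∈ Icc h 1, u x = u h + ∫ t in h..x, u' t)
    (hu' : IntervalIntegrable u' volume h 1)
    (hu'2 : IntervalIntegrable (fun x => u' x ^ 2) volume h 1) :
    (1 / 4 + δ ^ 2) * ∫ x in h..1, u x ^ 2 / x ^ 2
      ≤ (∫ x in h..1, u' x ^ 2) + (1 - (1 / 4 + δ ^ 2)) / h * u h ^ 2 := by
  have hfh : riccatiSolution δ (arctan (1 / (2 * δ))) h = (1 - (1 / 4 + δ ^ 2)) / h := by
    rw [riccatiSolution]
    congr 1
    linarith
  have hW : ContinuousOn (fun x : ℝ => (1 / 4 + δ ^ 2) / x ^ 2) (Icc h 1) :=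
    continuousOn_const.div (continuousOn_id.pow 2) fun x hx => (pow_pos (hh0.trans_le hx.1) 2).ne'
  have hriccati := integral_mul_sq_le_of_riccati hh1 hu hu' hu'2
    (fun x hx => hasDerivAt_riccatiSolution (hh0.trans_le hx.1)
      (cos_add_mul_log_pos hh0 hδ.le (arctan_lt_pi_div_two _) hang hx).ne') hW
  rw [riccatiSolution_one hδ.ne', hfh] at hriccati
  rw [← intervalIntegral.integral_const_mul]
  convert hriccati using 1
  · exact intervalIntegral.integral_congr fun x _ => by ring
  · ring

/-- If `δ > 0` solves `1/4 + δ·tan(arctan(1/(2δ)) + δ·log h) − δ² = 0` (with the angle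
in `(−π/2, π/2)`), then every `u ∈ U_h` satisfies
`∫₀¹ u'² ≥ (1/4 + δ²)·∫₀¹ u²/x²`. -/
theorem Uh_hardy_lower_bound (h δ : ℝ) (hh0 : 0 < h) (hh1 : h < 1) (hδ : 0 < δ)
    (hang : Real.arctan (1 / (2 * δ)) + δ * Real.log h ∈ Set.Ioo (-(π/2)) (π/2))
    (heq : 1/4 + δ * Real.tan (Real.arctan (1 / (2 * δ)) + δ * Real.log h) - δ ^ 2 = 0) :
    ∀ u u' : ℝ → ℝ, MemUh h u u' →
      (∫ x in (0:ℝ)..1, (u' x) ^ 2) ≥ (1/4 + δ ^ 2) * ∫ x in (0:ℝ)..1, (u x) ^ 2 / x ^ 2 := by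
  rintro u u' ⟨⟨huc, hu', hu'2, hu⟩, hu0, hlin⟩
  replace hu'2 : IntervalIntegrable (fun x => u' x ^ 2) volume 0 1 :=
    (intervalIntegrable_iff_integrableOn_Ioo_of_le zero_le_one).2 hu'2
  have huh : u h = ∫ x in (0:ℝ)..h, u' x := by simpa [hu0] using hu h ⟨hh0.le, hh1.le⟩
  obtain ⟨hint0, heq0⟩ := integral_sq_div_sq_of_linear hh0 hlin
  have hint1 : IntervalIntegrable (fun x => u x ^ 2 / x ^ 2) volume h 1 := by
    refine ContinuousOn.intervalIntegrable ?_
    rw [uIcc_of_le hh1.le]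
    exact ((huc.mono (Icc_subset_Icc_left hh0.le)).pow 2).div (continuousOn_id.pow 2)
      fun x hx => (pow_pos (hh0.trans_le hx.1) 2).ne'
  have hlower : u h ^ 2 / h ≤ ∫ x in (0:ℝ)..h, u' x ^ 2 := by
    simpa [huh] using sq_integral_div_le_integral_sq hh0 (hu'.mono_Icc le_rfl hh0.le hh1.le)
      (hu'2.mono_Icc le_rfl hh0.le hh1.le)
  have hupper := mul_integral_sq_div_sq_le hh0 hh1.le hδ hang.1 heq
    (eq_add_integral_of_mem_Icc hu hu' ⟨hh0.le, hh1.le⟩)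
    (hu'.mono_Icc hh0.le hh1.le le_rfl) (hu'2.mono_Icc hh0.le hh1.le le_rfl)
  rw [ge_iff_le, ← intervalIntegral.integral_add_adjacent_intervals hint0 hint1,
    ← intervalIntegral.integral_add_adjacent_intervals (hu'2.mono_Icc le_rfl hh0.le hh1.le)
      (hu'2.mono_Icc hh0.le hh1.le le_rfl), heq0]
  linear_combination hlower + hupper
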